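/- Concentration of the Randomized Response estimator for cut queries: Let n ≥ 2, ε ∈ (0,1], ν ∈ (0,1/2), and let ω be a weighted graph on Fin n. Let (X_{uv})_{(u,v)∈P} be independent random variables, where X_{uv} takes value 1 with probability (1 + ε·ω(u,v))/2 and value −1 with probability (1 − ε·ω(u,v))/2. Then for every nonempty proper subset S ⊆ Fin n with s = |S|: Pr[ |(1/ε)·Σ_{u∈S, v∉S} X_{uv} − Φ_ω(S)| > √(2·ln(1/ν)·s·(n−s))/ε ] ≤ 2ν, where the sum ranges over the s·(n−s) pairs with exactly one endpoint in S. -/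

import Mathlib

open MeasureTheory ProbabilityTheory Matrix

noncomputable section

abbrev Pairs (n : ℕ) := {p : Fin n × Fin n // p.1 < p.2}

instance matMeas (m n : Type*) : MeasurableSpace (Matrix m n ℝ) :=
  inferInstanceAs (MeasurableSpace (m → n → ℝ))

/-- The standard Gaussian measure on `ι → ℝ`: iid standard normal coordinates. -/
def stdGaussianPi (ι : Type*) [Fintype ι] : Measure (ι → ℝ) :=
  Measure.pi fun _ => gaussianReal 0 1

instance (ι : Type*) [Fintype ι] : IsProbabilityMeasure (stdGaussianPi ι) := by
  unfold stdGaussianPi; infer_instance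

/-- The measure on `m × ι` real matrices with iid standard normal entries. -/
def stdGaussianMatrix (m ι : Type*) [Fintype m] [Fintype ι] : Measure (Matrix m ι ℝ) :=
  (Measure.pi fun _ : m => stdGaussianPi ι : Measure (m → ι → ℝ))

/-- A weighted graph: symmetric, zero diagonal, weights in `[0,1]`. -/
def IsWeightedGraph {n : ℕ} (ω : Fin n → Fin n → ℝ) : Prop :=
  (∀ u v, ω u v = ω v u) ∧ (∀ u, ω u u = 0) ∧ ∀ u v, 0 ≤ ω u v ∧ ω u v ≤ 1

/-- Two weighted graphs are neighbors if they agree except on one pair `{a,b}`. -/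
def GraphNeighbors {n : ℕ} (ω ω' : Fin n → Fin n → ℝ) : Prop :=
  ∃ a b : Fin n, a ≠ b ∧
    ∀ u v : Fin n, ({u, v} : Finset (Fin n)) ≠ {a, b} → ω u v = ω' u v

/-- The edge matrix of a weighted graph: the row indexed by `(u,v)` (with `u < v`) is
`√(ω u v) · (e_u - e_v)ᵀ`. -/
def edgeMatrix {n : ℕ} (ω : Fin n → Fin n → ℝ) : Matrix (Pairs n) (Fin n) ℝ :=
  Matrix.of fun p x =>
    Real.sqrt (ω p.1.1 p.1.2) * (if x = p.1.1 then 1 else if x = p.1.2 then -1 else 0)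

/-- The modified weights `ω_H(u,v) = w/n + (1 - w/n)·ω(u,v)` for `u ≠ v`. -/
def modWeights {n : ℕ} (w : ℝ) (ω : Fin n → Fin n → ℝ) : Fin n → Fin n → ℝ :=
  fun u v => if u = v then 0 else w / n + (1 - w / n) * ω u v

/-!
Centred, each `X_{uv}` takes values in an interval of length 2, so by Hoeffding's lemma it is
sub-Gaussian with variance proxy 1. By independence the centred sum over the `s·(n−s)` cut pairs
is sub-Gaussian with variance proxy `s·(n−s)`, and each of its two Chernoff tails at
`√(2·ln(1/ν)·s·(n−s))` is `ν`. Since `E[X_{uv}] = ε·ω(u,v)`, this centred sum is `ε` times the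
error of the estimator.
-/

open Finset

namespace ProbabilityTheory.HasSubgaussianMGF

variable {Ω : Type*} [MeasurableSpace Ω] {μ : Measure Ω} {X : Ω → ℝ} {c : NNReal}

lemma measureReal_abs_ge_le (h : HasSubgaussianMGF X c μ) {t : ℝ} (ht : 0 ≤ t) :
    μ.real {o | t ≤ |X o|} ≤ 2 * Real.exp (-t ^ 2 / (2 * c)) := by
  have hsplit : {o | t ≤ |X o|} = {o | t ≤ X o} ∪ {o | t ≤ (-X) o} := by
    ext o
    simp only [Set.mem_ofPred_eq, Set.mem_union, Pi.neg_apply, le_abs]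
  calc μ.real {o | t ≤ |X o|}
      ≤ μ.real {o | t ≤ X o} + μ.real {o | t ≤ (-X) o} := hsplit ▸ measureReal_union_le _ _
    _ ≤ Real.exp (-t ^ 2 / (2 * c)) + Real.exp (-t ^ 2 / (2 * c)) :=
      add_le_add (h.measure_ge_le ht) (h.neg.measure_ge_le ht)
    _ = 2 * Real.exp (-t ^ 2 / (2 * c)) := by ring

end ProbabilityTheory.HasSubgaussianMGF

section Hoeffding

variable {Ω ι : Type*} [MeasurableSpace Ω] {μ : Measure Ω} [IsProbabilityMeasure μ]

theorem measureReal_abs_sum_sub_integral_ge_le {X : ι → Ω → ℝ} (hindep : iIndepFun X μ)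
    (hmeas : ∀ i, Measurable (X i)) (hX : ∀ i o, X i o ∈ Set.Icc (-1) 1)
    (s : Finset ι) {t : ℝ} (ht : 0 ≤ t) :
    μ.real {o | t ≤ |∑ i ∈ s, (X i o - μ[X i])|} ≤ 2 * Real.exp (-t ^ 2 / (2 * #s)) := by
  have hsub (i : ι) (_ : i ∈ s) : HasSubgaussianMGF (fun o => X i o - μ[X i]) 1 μ := by
    convert hasSubgaussianMGF_of_mem_Icc (hmeas i).aemeasurable (ae_of_all μ (hX i))
    norm_num
  have hcentered : iIndepFun (fun i o => X i o - μ[X i]) μ :=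
    hindep.comp (fun i x => x - ∫ o, X i o ∂μ) fun _ => measurable_id.sub_const _
  simpa using (HasSubgaussianMGF.sum_of_iIndepFun hcentered hsub).measureReal_abs_ge_le ht

theorem integral_eq_of_measure_eq_one {Y : Ω → ℝ} (hY : Measurable Y)
    (hv : ∀ o, Y o = 1 ∨ Y o = -1) {m : ℝ} (hm : -1 ≤ m)
    (h1 : μ {o | Y o = 1} = ENNReal.ofReal ((1 + m) / 2)) : μ[Y] = m := by
  have hset : MeasurableSet {o | Y o = 1} := hY (measurableSet_singleton 1)
  have hY_eq (o : Ω) : Y o = {o | Y o = 1}.indicator (fun _ => (2 : ℝ)) o - 1 := by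
    rcases hv o with h | h <;> simp [Set.indicator_apply, h] <;> norm_num
  rw [integral_congr_ae (ae_of_all μ hY_eq),
    integral_sub ((integrable_const _).indicator hset) (integrable_const _),
    integral_indicator_const _ hset, integral_const, measureReal_def, h1,
    ENNReal.toReal_ofReal (by linarith)]
  simp only [probReal_univ, smul_eq_mul]
  ring

end Hoeffding

theorem Real.exp_neg_sq_sqrt_two_mul_log_one_div_mul_div {k ν : ℝ} (hk : 0 < k) (hν : 0 < ν)
    (hν₁ : ν ≤ 1) : Real.exp (-Real.sqrt (2 * Real.log (1 / ν) * k) ^ 2 / (2 * k)) = ν := by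
  have hL : 0 ≤ Real.log (1 / ν) := Real.log_nonneg (by rwa [le_div_iff₀ hν, one_mul])
  rw [Real.sq_sqrt (by positivity), show -(2 * Real.log (1 / ν) * k) / (2 * k)
    = -Real.log (1 / ν) by field_simp, Real.exp_neg, Real.exp_log (one_div_pos.2 hν), one_div,
    inv_inv]

section CutPairs

variable {n : ℕ}

def cutPairs (S : Finset (Fin n)) : Finset (Pairs n) :=
  {p | (p.1.1 ∈ S ∧ p.1.2 ∉ S) ∨ (p.1.2 ∈ S ∧ p.1.1 ∉ S)}

theorem sum_cutPairs {M : Type*} [AddCommMonoid M] (S : Finset (Fin n))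
    (f : Fin n → Fin n → M) (hf : ∀ u v, f u v = f v u) :
    ∑ p ∈ cutPairs S, f p.1.1 p.1.2 = ∑ u ∈ S, ∑ v ∈ Sᶜ, f u v := by
  rw [← sum_product']
  -- orient each cut pair from `S` to `Sᶜ`; conversely, sort `(u, v)` into `(min u v, max u v)`
  refine sum_bij' (fun p _ => if p.1.1 ∈ S then p.1 else p.1.swap)
    (fun x hx => ⟨(min x.1 x.2, max x.1 x.2), min_lt_max.2 fun h => ?_⟩) ?_ ?_ ?_ ?_ ?_
  · simp only [mem_product, mem_compl] at hx
    exact hx.2 (h ▸ hx.1)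
  · intro p hp
    simp only [cutPairs, mem_filter, mem_univ, true_and] at hp
    simp only [mem_product, mem_compl]
    split_ifs <;> simp_all
  · intro x hx
    simp only [mem_product, mem_compl] at hx
    simp only [cutPairs, mem_filter, mem_univ, true_and]
    rcases le_total x.1 x.2 with h | h <;> simp_all
  · intro p _
    split_ifs <;> simp [p.2.le]
  · intro x hx
    simp only [mem_product, mem_compl] at hx
    rcases le_total x.1 x.2 with h | h <;> simp_all
  · intro p _
    split_ifs <;> simp [hf]

theorem card_cutPairs (S : Finset (Fin n)) : #(cutPairs S) = #S * #Sᶜ := by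
  simpa using sum_cutPairs S (fun _ _ => (1 : ℕ)) fun _ _ => rfl

theorem cast_card_cutPairs (S : Finset (Fin n)) :
    (#(cutPairs S) : ℝ) = #S * ((n : ℝ) - #S) := by
  rw [card_cutPairs, card_compl, Fintype.card_fin, Nat.cast_mul,
    Nat.cast_sub (by simpa using S.card_le_univ)]

theorem card_cutPairs_pos {S : Finset (Fin n)} (hS : S.Nonempty) (hS' : S ≠ univ) :
    0 < #(cutPairs S) := by
  have hSc : Sᶜ.Nonempty := (compl_ne_univ_iff_nonempty _).1 (by rwa [compl_compl])
  rw [card_cutPairs]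
  exact Nat.mul_pos hS.card_pos hSc.card_pos

end CutPairs

theorem randomized_response_cut_concentration_general {n : ℕ} {ε ν : ℝ}
    (hε : 0 < ε ∧ ε ≤ 1) (hν : 0 < ν ∧ ν < 1 / 2)
    {ω : Fin n → Fin n → ℝ} (hω : IsWeightedGraph ω)
    {Ω : Type*} [MeasurableSpace Ω] (μpr : Measure Ω) [IsProbabilityMeasure μpr]
    (X : Pairs n → Ω → ℝ) (hmeas : ∀ p, Measurable (X p))
    (hindep : ProbabilityTheory.iIndepFun X μpr)
    (hval : ∀ p o, X p o = 1 ∨ X p o = -1)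
    (hdist1 : ∀ p : Pairs n,
      μpr {o | X p o = 1} = ENNReal.ofReal ((1 + ε * ω p.1.1 p.1.2) / 2))
    (S : Finset (Fin n)) (hS : S.Nonempty) (hS' : S ≠ Finset.univ) :
    μpr {o | Real.sqrt (2 * Real.log (1 / ν) * S.card * ((n : ℝ) - S.card)) / ε
        < |ε⁻¹ * (∑ p : Pairs n,
              if (p.1.1 ∈ S ∧ p.1.2 ∉ S) ∨ (p.1.2 ∈ S ∧ p.1.1 ∉ S) then X p o else 0)
            - ∑ u ∈ S, ∑ v ∈ Sᶜ, ω u v|}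
    ≤ ENNReal.ofReal (2 * ν) := by
  obtain ⟨hε0, -⟩ := hε
  have hmean (p : Pairs n) : μpr[X p] = ε * ω p.1.1 p.1.2 :=
    integral_eq_of_measure_eq_one (hmeas p) (hval p)
      (by nlinarith [(hω.2.2 p.1.1 p.1.2).1]) (hdist1 p)
  have hdev (o : Ω) : (∑ p : Pairs n,
        if (p.1.1 ∈ S ∧ p.1.2 ∉ S) ∨ (p.1.2 ∈ S ∧ p.1.1 ∉ S) then X p o else 0)
      - ε * ∑ u ∈ S, ∑ v ∈ Sᶜ, ω u v = ∑ p ∈ cutPairs S, (X p o - μpr[X p]) := by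
    simp only [hmean, sum_sub_distrib, ← mul_sum, ← sum_cutPairs S ω hω.1]
    simp only [cutPairs, sum_filter]
  rw [mul_assoc (2 * _), ← cast_card_cutPairs]
  set b := Real.sqrt (2 * Real.log (1 / ν) * #(cutPairs S))
  have hscale (x y : ℝ) (h : b / ε < |ε⁻¹ * x - y|) : b ≤ |x - ε * y| := by
    rw [show ε⁻¹ * x - y = (x - ε * y) / ε by field_simp, abs_div, abs_of_pos hε0,
      div_lt_div_iff_of_pos_right hε0] at h
    exact h.le
  have hX (p : Pairs n) (o : Ω) : X p o ∈ Set.Icc (-1) 1 := by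
    rcases hval p o with h | h <;> simp [h]
  have htail := measureReal_abs_sum_sub_integral_ge_le hindep hmeas hX (cutPairs S)
    (Real.sqrt_nonneg _ : 0 ≤ b)
  rw [Real.exp_neg_sq_sqrt_two_mul_log_one_div_mul_div
    (by exact_mod_cast card_cutPairs_pos hS hS') hν.1 (by linarith [hν.2])] at htail
  calc _ ≤ μpr {o | b ≤ |∑ p ∈ cutPairs S, (X p o - μpr[X p])|} :=
        measure_mono fun o ho => show b ≤ _ from hdev o ▸ hscale _ _ ho
    _ = ENNReal.ofReal (μpr.real {o | b ≤ |∑ p ∈ cutPairs S, (X p o - μpr[X p])|}) :=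
        (ofReal_measureReal).symm
    _ ≤ ENNReal.ofReal (2 * ν) := ENNReal.ofReal_le_ofReal htail

/-- Concentration of the Randomized Response estimator for cut queries: independent `±1`
random variables `X_{uv}` with `E[X_{uv}] = ε·ω(u,v)` yield an estimator of the cut value
`Φ_ω(S)` with additive error at most `√(2·ln(1/ν)·s·(n−s))/ε` except with probability `2ν`. -/
theorem randomized_response_cut_concentration {n : ℕ} (hn : 2 ≤ n) {ε ν : ℝ}
    (hε : 0 < ε ∧ ε ≤ 1) (hν : 0 < ν ∧ ν < 1 / 2)
    {ω : Fin n → Fin n → ℝ} (hω : IsWeightedGraph ω)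
    {Ω : Type*} [MeasurableSpace Ω] (μpr : Measure Ω) [IsProbabilityMeasure μpr]
    (X : Pairs n → Ω → ℝ) (hmeas : ∀ p, Measurable (X p))
    (hindep : ProbabilityTheory.iIndepFun X μpr)
    (hval : ∀ p o, X p o = 1 ∨ X p o = -1)
    (hdist1 : ∀ p : Pairs n,
      μpr {o | X p o = 1} = ENNReal.ofReal ((1 + ε * ω p.1.1 p.1.2) / 2))
    (hdist2 : ∀ p : Pairs n,
      μpr {o | X p o = -1} = ENNReal.ofReal ((1 - ε * ω p.1.1 p.1.2) / 2))
    (S : Finset (Fin n)) (hS : S.Nonempty) (hS' : S ≠ Finset.univ) :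
    μpr {o | Real.sqrt (2 * Real.log (1 / ν) * S.card * ((n : ℝ) - S.card)) / ε
        < |ε⁻¹ * (∑ p : Pairs n,
              if (p.1.1 ∈ S ∧ p.1.2 ∉ S) ∨ (p.1.2 ∈ S ∧ p.1.1 ∉ S) then X p o else 0)
            - ∑ u ∈ S, ∑ v ∈ Sᶜ, ω u v|}
    ≤ ENNReal.ofReal (2 * ν) :=
  randomized_response_cut_concentration_general hε hν hω μpr X hmeas hindep hval hdist1 S hS hS'
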